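/- Let (x^k) be generated by the augmented Lagrangian method (Algorithm 3.1) applied to the partially penalized GNEP, under Assumption 3.2 with ε_k → 0 and ε'_k → 0, and let x̄ be a limit point of (x^k). If x̄ is feasible for the GNEP and GNEP-CPLD holds at x̄ for the combined constraints c^ν = (g^ν, h^ν), then x̄ is a KKT point of the GNEP. -/

import Mathlib

open Filter Topology Finset Function RealInnerProductSpace

/-- The strategy space of a GNEP: one Euclidean block per player. -/
abbrev Strat {N : ℕ} (n : Fin N → ℕ) := (ν : Fin N) → EuclideanSpace ℝ (Fin (n ν))

/-- Partial gradient of `f : Strat n → ℝ` with respect to player `ν`'s block at `x`. -/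
noncomputable def pgrad {N : ℕ} {n : Fin N → ℕ} (ν : Fin N)
    (f : Strat n → ℝ) (x : Strat n) : EuclideanSpace ℝ (Fin (n ν)) :=
  gradient (fun z => f (Function.update x ν z)) (x ν)

/-- Positive linear dependence of a family on a finite index set. -/
def PosLinDep {ι E : Type*} [AddCommGroup E] [Module ℝ E]
    (s : Finset ι) (v : ι → E) : Prop :=
  ∃ a : ι → ℝ, (∀ i, 0 ≤ a i) ∧ (∃ i ∈ s, a i ≠ 0) ∧ ∑ i ∈ s, a i • v i = 0

/-- Linear dependence of a family on a finite index set. -/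
def LinDep {ι E : Type*} [AddCommGroup E] [Module ℝ E]
    (s : Finset ι) (v : ι → E) : Prop :=
  ∃ a : ι → ℝ, (∃ i ∈ s, a i ≠ 0) ∧ ∑ i ∈ s, a i • v i = 0

/-- CPLD with respect to player `ν`. -/
def CPLDnu {N : ℕ} {n : Fin N → ℕ} {ι : Type*} (ν : Fin N)
    (c : ι → Strat n → ℝ) (x : Strat n) : Prop :=
  ∀ I : Finset ι, (∀ i ∈ I, c i x = 0) →
    PosLinDep I (fun i => pgrad ν (c i) x) →
    ∃ U ∈ 𝓝 x, ∀ y ∈ U, LinDep I (fun i => pgrad ν (c i) y)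

/-- EMFCQ with respect to player `ν`. -/
def EMFCQnu {N : ℕ} {n : Fin N → ℕ} {ι : Type*} (ν : Fin N)
    (c : ι → Strat n → ℝ) (x : Strat n) : Prop :=
  ∃ d : EuclideanSpace ℝ (Fin (n ν)), ∀ i, 0 ≤ c i x → inner (𝕜 := ℝ) (pgrad ν (c i) x) d < 0

/-!
Along a subsequence with `x (k + 1) → xbar`, the iterates are approximate KKT points of every
player's problem: the gradient and `h`-complementarity residuals tend to zero, and multipliers of
constraints inactive at `xbar` tend to zero. For `g` this holds either because the penalty update
makes `‖min (-g) λ‖` decrease geometrically, or because `ρ → ∞` while the safeguards `u` stay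
bounded.

Approximate KKT plus CPLD gives KKT. By the conic Carathéodory theorem the multipliers may be taken
on linearly independent gradients, with a fixed support along a further subsequence. Normalising by
`1 + ∑ multipliers` and passing to the limit, a vanishing weight on `∇θ` would be a positive linear
dependence at `xbar`, which CPLD propagates to linear dependence nearby, contradicting independence.
-/

theorem LinDep.not_linearIndepOn {ι E : Type*} [AddCommGroup E] [Module ℝ E] {s : Finset ι}
    {v : ι → E} (h : LinDep s v) : ¬ LinearIndepOn ℝ v (s : Set ι) := by
  obtain ⟨a, ⟨i, hi, hai⟩, hsum⟩ := h
  exact fun hli => hai (linearIndepOn_finset_iff.1 hli a hsum i hi)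

section Caratheodory

variable {ι E : Type*} [Fintype ι] [AddCommGroup E] [Module ℝ E]

theorem exists_nonneg_sum_eq_of_not_linearIndepOn [DecidableEq ι] {v : ι → E} {s : Finset ι}
    {t : ι → ℝ} (hdep : ¬ LinearIndepOn ℝ v (s : Set ι)) (ht : ∀ i, 0 ≤ t i) (hts : ∀ i ∉ s, t i = 0) :
    ∃ i₀ ∈ s, ∃ t' : ι → ℝ, (∀ i, 0 ≤ t' i) ∧ (∀ i ∉ s.erase i₀, t' i = 0) ∧
      ∑ i, t' i • v i = ∑ i, t i • v i := by
  obtain ⟨a, ha, hpos⟩ : ∃ a : ι → ℝ, ∑ i ∈ s, a i • v i = 0 ∧ ∃ i ∈ s, 0 < a i := by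
    simp only [linearIndepOn_finset_iff, not_forall] at hdep
    obtain ⟨a, ha, i, hi, hai⟩ := hdep
    rcases lt_or_gt_of_ne hai with hneg | hpos
    · exact ⟨-a, by simp [neg_smul, ha], i, hi, neg_pos.2 hneg⟩
    · exact ⟨a, ha, i, hi, hpos⟩
  -- Subtract the largest multiple `α • a` of the relation that keeps all coefficients nonnegative.
  obtain ⟨i₀, hi₀, hmin⟩ := (s.filter (0 < a ·)).exists_min_image (fun i => t i / a i)
    (by simpa [Finset.Nonempty] using hpos)
  rw [Finset.mem_filter] at hi₀
  set α := t i₀ / a i₀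
  have hα : 0 ≤ α := div_nonneg (ht i₀) hi₀.2.le
  refine ⟨i₀, hi₀.1, fun i => if i ∈ s then t i - α * a i else 0, fun i => ?_, fun i hi => ?_, ?_⟩
  · dsimp only
    split_ifs with his
    · rcases le_or_gt (a i) 0 with hai | hai
      · nlinarith [ht i]
      · have := hmin i (Finset.mem_filter.2 ⟨his, hai⟩)
        rw [le_div_iff₀ hai] at this
        linarith
    · exact le_rfl
  · rw [Finset.mem_erase, not_and_or, not_not] at hi
    rcases hi with rfl | hi
    · simp [hi₀.1, α, div_mul_cancel₀ _ hi₀.2.ne']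
    · simp [hi]
  · simp only [ite_smul, zero_smul, Finset.sum_ite_mem, Finset.univ_inter, sub_smul, mul_smul,
      Finset.sum_sub_distrib, ← Finset.smul_sum, ha, smul_zero, sub_zero]
    exact Finset.sum_subset (Finset.subset_univ s) fun i _ hi => by simp [hts i hi]

/-- Conic Carathéodory theorem. -/
theorem exists_linearIndepOn_nonneg_sum_eq (v : ι → E) (s : Finset ι) (t : ι → ℝ)
    (ht : ∀ i, 0 ≤ t i) (hts : ∀ i ∉ s, t i = 0) :
    ∃ s' ⊆ s, ∃ t' : ι → ℝ, (∀ i, 0 ≤ t' i) ∧ (∀ i ∉ s', t' i = 0) ∧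
      ∑ i, t' i • v i = ∑ i, t i • v i ∧ LinearIndepOn ℝ v (s' : Set ι) := by
  classical
  induction s using Finset.strongInduction generalizing t with
  | H s ih =>
    by_cases hli : LinearIndepOn ℝ v (s : Set ι)
    · exact ⟨s, subset_rfl, t, ht, hts, rfl, hli⟩
    obtain ⟨i₀, hi₀, t', ht', hts', hsum⟩ := exists_nonneg_sum_eq_of_not_linearIndepOn hli ht hts
    obtain ⟨s', hs', t'', ht'', hts'', hsum', hli'⟩ :=
      ih _ (Finset.erase_ssubset hi₀) t' ht' hts'
    exact ⟨s', hs'.trans (Finset.erase_subset _ _), t'', ht'', hts'', hsum'.trans hsum, hli'⟩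

end Caratheodory

section Limits

variable {ι E : Type*} [Fintype ι] [NormedAddCommGroup E] [NormedSpace ℝ E]
  {V : ℕ → ι → E} {V' : ι → E} {b : ℕ → E} {b' : E}

/-- Dividing `b k + ∑ i, t k i • V k i` by `1 + ∑ i, t k i` puts the coefficients `(1, t k)`
in the standard simplex, so a subsequence of them converges even if `t k` is unbounded. -/
theorem exists_stdSimplex_combination_eq_zero_of_tendsto {t : ℕ → ι → ℝ}
    (hV : ∀ i, Tendsto (fun k => V k i) atTop (𝓝 (V' i))) (hb : Tendsto b atTop (𝓝 b'))
    (ht : ∀ k i, 0 ≤ t k i) (hsum : Tendsto (fun k => b k + ∑ i, t k i • V k i) atTop (𝓝 0)) :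
    ∃ w ∈ stdSimplex ℝ (Option ι), (∀ i, (∀ k, t k i = 0) → w (some i) = 0) ∧
      w none • b' + ∑ i, w (some i) • V' i = 0 := by
  set d : ℕ → ℝ := fun k => 1 + ∑ i, t k i
  have hd : ∀ k, 0 < d k := fun k =>
    add_pos_of_pos_of_nonneg one_pos (Finset.sum_nonneg fun i _ => ht k i)
  set w : ℕ → Option ι → ℝ := fun k o => (d k)⁻¹ * o.elim 1 (t k)
  have hw : ∀ k, w k ∈ stdSimplex ℝ (Option ι) := fun k => by
    refine ⟨fun o => mul_nonneg (inv_nonneg.2 (hd k).le) ?_, ?_⟩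
    · cases o <;> simp [ht]
    · simp only [w, Fintype.sum_option, Option.elim, ← Finset.mul_sum]
      exact inv_mul_cancel₀ (hd k).ne'
  obtain ⟨w', hw', φ, hφ, hlim⟩ := (isCompact_stdSimplex ℝ (Option ι)).tendsto_subseq hw
  have hcoord : ∀ o, Tendsto (fun j => w (φ j) o) atTop (𝓝 (w' o)) := fun o =>
    ((continuous_apply o).tendsto w').comp hlim
  have hφ' := hφ.tendsto_atTop
  refine ⟨w', hw', fun i hi => tendsto_nhds_unique (hcoord (some i)) ?_, ?_⟩
  · simp [w, hi]
  have hscaled : ∀ k, w k none • b k + ∑ i, w k (some i) • V k i =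
      (d k)⁻¹ • (b k + ∑ i, t k i • V k i) := fun k => by
    simp [w, smul_add, Finset.smul_sum, smul_smul]
  have hzero : Tendsto (fun k => (d k)⁻¹ • (b k + ∑ i, t k i • V k i)) atTop (𝓝 0) := by
    refine squeeze_zero_norm (fun k => ?_) (by simpa using hsum.norm)
    rw [norm_smul, Real.norm_of_nonneg (inv_nonneg.2 (hd k).le)]
    refine mul_le_of_le_one_left (norm_nonneg _) (inv_le_one_of_one_le₀ ?_)
    simp only [d, le_add_iff_nonneg_right]
    exact Finset.sum_nonneg fun i _ => ht k i
  refine tendsto_nhds_unique ?_ ((hzero.comp hφ').congr fun j => (hscaled (φ j)).symm)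
  exact ((hcoord none).smul (hb.comp hφ')).add
    (tendsto_finsetSum _ fun i _ => (hcoord (some i)).smul ((hV i).comp hφ'))

theorem exists_nonneg_combination_of_linearIndepOn {S : Finset ι} {t : ℕ → ι → ℝ}
    (hli : ∀ k, LinearIndepOn ℝ (V k) (S : Set ι))
    (hV : ∀ i, Tendsto (fun k => V k i) atTop (𝓝 (V' i))) (hb : Tendsto b atTop (𝓝 b'))
    (ht : ∀ k i, 0 ≤ t k i) (htS : ∀ k, ∀ i ∉ S, t k i = 0)
    (hsum : Tendsto (fun k => b k + ∑ i, t k i • V k i) atTop (𝓝 0))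
    (hcpld : PosLinDep S V' → ∀ᶠ k in atTop, LinDep S (V k)) :
    ∃ t' : ι → ℝ, (∀ i, 0 ≤ t' i) ∧ (∀ i ∉ S, t' i = 0) ∧ b' + ∑ i, t' i • V' i = 0 := by
  obtain ⟨w, ⟨hw0, hw1⟩, hwS, hw⟩ :=
    exists_stdSimplex_combination_eq_zero_of_tendsto hV hb ht hsum
  replace hwS : ∀ i ∉ S, w (some i) = 0 := fun i hi => hwS i fun k => htS k i hi
  have hsumS : ∀ c : ι → E, ∑ i ∈ S, w (some i) • c i = ∑ i, w (some i) • c i := fun c =>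
    Finset.sum_subset (Finset.subset_univ S) fun i _ hi => by rw [hwS i hi, zero_smul]
  rcases (hw0 none).eq_or_lt with hβ | hβ
  · -- With no weight on `b'` the limit is a positive dependence of `V'` on `S`, which `hcpld`
    -- turns into a dependence of some `V k`.
    have hdep : PosLinDep S V' := by
      refine ⟨fun i => w (some i), fun i => hw0 _, ?_, by simpa [hsumS, ← hβ] using hw⟩
      by_contra! hS
      have : ∑ i, w (some i) = 0 :=
        Finset.sum_eq_zero fun i _ => (em (i ∈ S)).elim (hS i) (hwS i)
      simp [Fintype.sum_option, ← hβ, this] at hw1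
    obtain ⟨k, hk⟩ := (hcpld hdep).exists
    exact absurd (hli k) hk.not_linearIndepOn
  · refine ⟨fun i => w (some i) / w none, fun i => div_nonneg (hw0 _) hβ.le,
      fun i hi => by simp [hwS i hi], ?_⟩
    have := congrArg ((w none)⁻¹ • ·) hw
    simpa [smul_add, Finset.smul_sum, smul_smul, inv_mul_cancel₀ hβ.ne', div_eq_inv_mul] using this

theorem exists_nonneg_combination_of_tendsto {A : Finset ι} {t : ℕ → ι → ℝ}
    (hV : ∀ i, Tendsto (fun k => V k i) atTop (𝓝 (V' i))) (hb : Tendsto b atTop (𝓝 b'))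
    (ht : ∀ k i, 0 ≤ t k i) (htA : ∀ k, ∀ i ∉ A, t k i = 0)
    (hsum : Tendsto (fun k => b k + ∑ i, t k i • V k i) atTop (𝓝 0))
    (hcpld : ∀ I ⊆ A, PosLinDep I V' → ∀ᶠ k in atTop, LinDep I (V k)) :
    ∃ t' : ι → ℝ, (∀ i, 0 ≤ t' i) ∧ (∀ i ∉ A, t' i = 0) ∧ b' + ∑ i, t' i • V' i = 0 := by
  choose S hSA t' ht' htS hsum' hli using
    fun k => exists_linearIndepOn_nonneg_sum_eq (V k) A (t k) (ht k) (htA k)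
  -- Only finitely many supports occur, so one of them occurs along a subsequence `φ`.
  obtain ⟨S₀, hS₀⟩ := Finite.exists_infinite_fiber S
  obtain ⟨φ, hφ, hφS⟩ := extraction_of_frequently_atTop
    (Nat.frequently_atTop_iff_infinite.2 (Set.infinite_coe_iff.1 hS₀))
  have hφ' := hφ.tendsto_atTop
  have hS₀A : S₀ ⊆ A := hφS 0 ▸ hSA (φ 0)
  obtain ⟨t'', ht'', htS₀, heq⟩ := exists_nonneg_combination_of_linearIndepOn (S := S₀)
    (V := fun j => V (φ j)) (t := fun j => t' (φ j)) (fun j => hφS j ▸ hli (φ j))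
    (fun i => (hV i).comp hφ') (hb.comp hφ') (fun j => ht' (φ j)) (fun j => hφS j ▸ htS (φ j))
    ((hsum.comp hφ').congr fun j => by simp [hsum' (φ j)])
    (fun hdep => hφ'.eventually (hcpld S₀ hS₀A hdep))
  exact ⟨t'', ht'', fun i hi => htS₀ i fun h => hi (hS₀A h), heq⟩

theorem exists_nonneg_combination_of_tendsto_min {A : Finset ι} {t : ℕ → ι → ℝ}
    (hV : ∀ i, Tendsto (fun k => V k i) atTop (𝓝 (V' i))) (hb : Tendsto b atTop (𝓝 b'))
    (hneg : ∀ i, Tendsto (fun k => min (t k i) 0) atTop (𝓝 0))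
    (hout : ∀ i ∉ A, Tendsto (fun k => t k i) atTop (𝓝 0))
    (hsum : Tendsto (fun k => b k + ∑ i, t k i • V k i) atTop (𝓝 0))
    (hcpld : ∀ I ⊆ A, PosLinDep I V' → ∀ᶠ k in atTop, LinDep I (V k)) :
    ∃ t' : ι → ℝ, (∀ i, 0 ≤ t' i) ∧ (∀ i ∉ A, t' i = 0) ∧ b' + ∑ i, t' i • V' i = 0 := by
  classical
  set tpos : ℕ → ι → ℝ := fun k i => if i ∈ A then max (t k i) 0 else 0
  have hrest : ∀ i, Tendsto (fun k => t k i - tpos k i) atTop (𝓝 0) := fun i => by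
    by_cases hi : i ∈ A
    · have hsub : ∀ x : ℝ, x - max x 0 = min x 0 := fun x => by
        rcases le_total x 0 with h | h <;> simp [h]
      simpa [tpos, hi, hsub] using hneg i
    · simpa [tpos, hi] using hout i hi
  refine exists_nonneg_combination_of_tendsto
    (b := fun k => b k + ∑ i, (t k i - tpos k i) • V k i) (t := tpos) hV ?_
    (fun k i => by by_cases hi : i ∈ A <;> simp [tpos, hi]) (fun k i hi => by simp [tpos, hi])
    (hsum.congr fun k => ?_) hcpld
  · simpa using hb.add (tendsto_finsetSum _ fun i _ => (hrest i).smul (hV i))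
  · simp only [sub_smul, Finset.sum_sub_distrib]
    abel

end Limits

theorem continuous_pgrad {N : ℕ} {n : Fin N → ℕ} (ν : Fin N) {f : Strat n → ℝ}
    (hf : ContDiff ℝ 1 f) : Continuous (pgrad ν f) := by
  set L : EuclideanSpace ℝ (Fin (n ν)) →L[ℝ] Strat n := .pi (Pi.single ν (.id ℝ _))
  have hL : ∀ x, pgrad ν f x = (InnerProductSpace.toDual ℝ _).symm ((fderiv ℝ f x).comp L) := by
    intro x
    have hfx : HasFDerivAt f (fderiv ℝ f x) (update x ν (x ν)) := by
      rw [update_eq_self]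
      exact (hf.differentiable one_ne_zero x).hasFDerivAt
    exact (hfx.comp (x ν) (hasFDerivAt_update x (x ν))).hasGradientAt.gradient
  rw [funext hL]
  exact (InnerProductSpace.toDual ℝ _).symm.continuous.comp
    ((hf.continuous_fderiv one_ne_zero).clm_comp continuous_const)

theorem exists_kkt_of_tendsto_of_cpld {N : ℕ} {n : Fin N → ℕ} {ι : Type*} [Fintype ι]
    {ν : Fin N} {f : Strat n → ℝ} {c : ι → Strat n → ℝ} {x' : Strat n} {y : ℕ → Strat n}
    {t : ℕ → ι → ℝ} (hf : ContDiff ℝ 1 f) (hc : ∀ i, ContDiff ℝ 1 (c i))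
    (hfeas : ∀ i, c i x' ≤ 0) (hcpld : CPLDnu ν c x') (hy : Tendsto y atTop (𝓝 x'))
    (hres : Tendsto (fun k => pgrad ν f (y k) + ∑ i, t k i • pgrad ν (c i) (y k)) atTop (𝓝 0))
    (hneg : ∀ i, Tendsto (fun k => min (t k i) 0) atTop (𝓝 0))
    (hinact : ∀ i, c i x' < 0 → Tendsto (fun k => t k i) atTop (𝓝 0)) :
    ∃ t' : ι → ℝ, pgrad ν f x' + ∑ i, t' i • pgrad ν (c i) x' = 0 ∧
      ∀ i, min (-c i x') (t' i) = 0 := by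
  classical
  set A := Finset.univ.filter fun i => c i x' = 0
  have hgrad {F : Strat n → ℝ} (hF : ContDiff ℝ 1 F) :
      Tendsto (fun k => pgrad ν F (y k)) atTop (𝓝 (pgrad ν F x')) :=
    ((continuous_pgrad ν hF).tendsto x').comp hy
  have hcpldA : ∀ I ⊆ A, PosLinDep I (fun i => pgrad ν (c i) x') →
      ∀ᶠ k in atTop, LinDep I (fun i => pgrad ν (c i) (y k)) := by
    intro I hI hdep
    obtain ⟨U, hU, hdepU⟩ := hcpld I (fun i hi => (Finset.mem_filter.1 (hI hi)).2) hdep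
    exact (hy.eventually_mem hU).mono fun k hk => hdepU _ hk
  obtain ⟨t', ht', htA, heq⟩ := exists_nonneg_combination_of_tendsto_min (A := A)
    (fun i => hgrad (hc i)) (hgrad hf) hneg
    (fun i hi => hinact i ((hfeas i).lt_of_ne (by simpa [A] using hi))) hres hcpldA
  refine ⟨t', heq, fun i => ?_⟩
  rcases (hfeas i).eq_or_lt with h0 | hlt
  · simp [h0, ht' i]
  · simp [htA i (by simp [A, hlt.ne]), hlt.le]

theorem abs_le_sqrt_sum_sq {ι : Type*} [Fintype ι] (a : ι → ℝ) (i : ι) :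
    |a i| ≤ √(∑ j, a j ^ 2) :=
  Real.abs_le_sqrt (Finset.single_le_sum (fun j _ => sq_nonneg (a j)) (Finset.mem_univ i))

theorem abs_min_zero_le_abs_min (a m : ℝ) : |min m 0| ≤ |min a m| := by
  rcases le_total m 0 with hm | hm
  · rw [min_eq_left hm, abs_of_nonpos hm, abs_of_nonpos ((min_le_right a m).trans hm)]
    exact neg_le_neg (min_le_right a m)
  · simp [hm]

theorem tendsto_zero_of_tendsto_min {α : Type*} {l : Filter α} {a m : α → ℝ} {δ : ℝ}
    (ha : Tendsto a l (𝓝 δ)) (hδ : 0 < δ) (hmin : Tendsto (fun k => min (a k) (m k)) l (𝓝 0)) :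
    Tendsto m l (𝓝 0) := by
  refine hmin.congr' ?_
  filter_upwards [ha.eventually (lt_mem_nhds (half_lt_self hδ)),
    hmin.eventually (gt_mem_nhds (half_pos hδ))] with k hak hmk
  rcases le_total (m k) (a k) with h | h
  · exact min_eq_right h
  · rw [min_eq_left h] at hmk
    linarith

theorem tendsto_atTop_of_frequently_eq_mul {ρ : ℕ → ℝ} {γ : ℝ} (hγ : 1 < γ) (hρ0 : 0 < ρ 0)
    (hstep : ∀ k, ρ (k + 1) = ρ k ∨ ρ (k + 1) = γ * ρ k)
    (hfreq : ∃ᶠ k in atTop, ρ (k + 1) = γ * ρ k) : Tendsto ρ atTop atTop := by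
  have hpos : ∀ k, 0 < ρ k := fun k => by
    induction k with
    | zero => exact hρ0
    | succ k ih => rcases hstep k with h | h <;> rw [h] <;> positivity
  have hmono : Monotone ρ := monotone_nat_of_le_succ fun k => by
    rcases hstep k with h | h <;> rw [h]
    exact le_mul_of_one_le_left (hpos k).le hγ.le
  have hgrow : ∀ j, ∃ k, γ ^ j * ρ 0 ≤ ρ k := fun j => by
    induction j with
    | zero => exact ⟨0, by simp⟩
    | succ j ih =>
      obtain ⟨k, hk⟩ := ih
      obtain ⟨k', hkk', hk'⟩ := frequently_atTop.1 hfreq k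
      refine ⟨k' + 1, ?_⟩
      rw [hk', pow_succ', mul_assoc]
      exact mul_le_mul_of_nonneg_left (hk.trans (hmono hkk')) (by positivity)
  refine tendsto_atTop_atTop_of_monotone hmono fun M => ?_
  obtain ⟨j, hj⟩ := pow_unbounded_of_one_lt (M / ρ 0) hγ
  obtain ⟨k, hk⟩ := hgrow j
  exact ⟨k, ((div_lt_iff₀ hρ0).1 hj).le.trans hk⟩

theorem tendsto_zero_or_tendsto_atTop_of_penalty_update {R ρ : ℕ → ℝ} {τ γ : ℝ} (hτ : τ < 1)
    (hγ : 1 < γ) (hR : ∀ k, 0 ≤ R k) (hρ0 : 0 < ρ 0)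
    (hupd : ∀ k, (R (k + 1) ≤ τ * R k → ρ (k + 1) = ρ k) ∧
      (¬ R (k + 1) ≤ τ * R k → ρ (k + 1) = γ * ρ k)) :
    Tendsto R atTop (𝓝 0) ∨ Tendsto ρ atTop atTop := by
  by_cases hdec : ∀ᶠ k in atTop, R (k + 1) ≤ τ * R k
  · left
    refine (summable_of_ratio_norm_eventually_le hτ ?_).tendsto_atTop_zero
    simpa only [Real.norm_of_nonneg (hR _)] using hdec
  · right
    exact tendsto_atTop_of_frequently_eq_mul hγ hρ0 (fun k => (em _).imp (hupd k).1 (hupd k).2)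
      ((not_eventually.1 hdec).mono fun k hk => (hupd k).2 hk)

/-- Either the complementarity residual vanishes, or `ρ k * G (k + 1) → -∞` while `U k ≤ umax`. -/
theorem tendsto_multiplier_zero_of_inactive {G Λ U ρ R : ℕ → ℝ} {umax G' : ℝ} {ψ : ℕ → ℕ}
    (hΛ : ∀ k, Λ (k + 1) = max (U k + ρ k * G (k + 1)) 0) (hU : ∀ k, U k ≤ umax)
    (hR : ∀ k, |min (-G k) (Λ k)| ≤ R k) (hdich : Tendsto R atTop (𝓝 0) ∨ Tendsto ρ atTop atTop)
    (hψ : Tendsto ψ atTop atTop) (hG : Tendsto (fun j => G (ψ j + 1)) atTop (𝓝 G'))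
    (hG' : G' < 0) : Tendsto (fun j => Λ (ψ j + 1)) atTop (𝓝 0) := by
  rcases hdich with hR0 | hρ
  · have hmin : Tendsto (fun k => min (-G k) (Λ k)) atTop (𝓝 0) := squeeze_zero_norm hR hR0
    exact tendsto_zero_of_tendsto_min hG.neg (neg_pos.2 hG')
      (hmin.comp ((tendsto_add_atTop_nat 1).comp hψ))
  · have hbot := (hρ.comp hψ).atTop_mul_neg hG' hG
    refine tendsto_const_nhds.congr' ?_
    filter_upwards [hbot.eventually_lt_atBot (-umax)] with j hj
    rw [hΛ, max_eq_right (by linarith [hU (ψ j), show ρ (ψ j) * G (ψ j + 1) < -umax from hj])]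

theorem exists_seq_tendsto_succ_of_mapClusterPt {X : Type*} [TopologicalSpace X]
    [FirstCountableTopology X] {x : ℕ → X} {x' : X} (h : MapClusterPt x' atTop x) :
    ∃ ψ : ℕ → ℕ, Tendsto (fun j => x (ψ j + 1)) atTop (𝓝 x') ∧ Tendsto ψ atTop atTop := by
  have hshift : MapClusterPt x' atTop (x ∘ fun k => k + 1) := by
    rwa [MapClusterPt, ← Filter.map_map, map_add_atTop_eq_nat]
  exact hshift.exists_seq_tendsto

theorem stmt14_general {N : ℕ} {n m p : Fin N → ℕ}
    (θ : Fin N → Strat n → ℝ)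
    (g : (ν : Fin N) → Fin (m ν) → Strat n → ℝ)
    (h : (ν : Fin N) → Fin (p ν) → Strat n → ℝ)
    (hθ : ∀ ν, ContDiff ℝ 1 (θ ν))
    (hg : ∀ ν i, ContDiff ℝ 1 (g ν i))
    (hh : ∀ ν j, ContDiff ℝ 1 (h ν j))
    (x : ℕ → Strat n)
    (lam : (k : ℕ) → (ν : Fin N) → Fin (m ν) → ℝ)
    (mu : (k : ℕ) → (ν : Fin N) → Fin (p ν) → ℝ)
    (u : (k : ℕ) → (ν : Fin N) → Fin (m ν) → ℝ)
    (rho : ℕ → Fin N → ℝ)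
    (umax : ℝ) (τ γ : Fin N → ℝ)
    (hτ : ∀ ν, τ ν ∈ Set.Ioo (0:ℝ) 1)
    (hγ : ∀ ν, 1 < γ ν)
    (hrho0 : ∀ ν, 0 < rho 0 ν)
    (hu0 : ∀ ν i, u 0 ν i ∈ Set.Icc 0 umax)
    (hlam : ∀ k ν i, lam (k+1) ν i = max (u k ν i + rho k ν * g ν i (x (k+1))) 0)
    (hu : ∀ k ν i, u (k+1) ν i = min (lam (k+1) ν i) umax)
    (hrho : ∀ k ν,
      (Real.sqrt (∑ i, (min (-(g ν i (x (k+1)))) (lam (k+1) ν i)) ^ 2) ≤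
          τ ν * Real.sqrt (∑ i, (min (-(g ν i (x k))) (lam k ν i)) ^ 2) →
        rho (k+1) ν = rho k ν) ∧
      (¬ (Real.sqrt (∑ i, (min (-(g ν i (x (k+1)))) (lam (k+1) ν i)) ^ 2) ≤
          τ ν * Real.sqrt (∑ i, (min (-(g ν i (x k))) (lam k ν i)) ^ 2)) →
        rho (k+1) ν = γ ν * rho k ν))
    (eps eps' : ℕ → ℝ)
    (heps' : Tendsto eps' atTop (𝓝 0))
    (hA1 : ∀ k ν, ‖pgrad ν (θ ν) (x (k+1))
        + ∑ i, max (u k ν i + rho k ν * g ν i (x (k+1))) 0 • pgrad ν (g ν i) (x (k+1))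
        + ∑ j, mu (k+1) ν j • pgrad ν (h ν j) (x (k+1))‖ ≤ eps k)
    (hA2 : ∀ k ν, Real.sqrt (∑ j, (min (-(h ν j (x (k+1)))) (mu (k+1) ν j)) ^ 2) ≤ eps' k)
    (heps : Tendsto eps atTop (𝓝 0))
    (xbar : Strat n)
    (hclus : MapClusterPt xbar atTop x)
    (hfeasg : ∀ ν i, g ν i xbar ≤ 0)
    (hfeash : ∀ ν j, h ν j xbar ≤ 0)
    (hCPLD : ∀ ν, CPLDnu ν (Sum.elim (g ν) (h ν)) xbar) :
    ∃ (lambar : (ν : Fin N) → Fin (m ν) → ℝ) (mubar : (ν : Fin N) → Fin (p ν) → ℝ),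
      ∀ ν, (pgrad ν (θ ν) xbar + ∑ i, lambar ν i • pgrad ν (g ν i) xbar
          + ∑ j, mubar ν j • pgrad ν (h ν j) xbar = 0) ∧
        (∀ i, min (-(g ν i xbar)) (lambar ν i) = 0) ∧
        (∀ j, min (-(h ν j xbar)) (mubar ν j) = 0) := by
  obtain ⟨ψ, hxψ, hψ⟩ := exists_seq_tendsto_succ_of_mapClusterPt hclus
  have hu_le : ∀ k ν i, u k ν i ≤ umax := by
    rintro (_ | k) ν i
    exacts [(hu0 ν i).2, (hu k ν i).symm ▸ min_le_right _ _]
  have hplayer : ∀ ν, ∃ t : Fin (m ν) ⊕ Fin (p ν) → ℝ,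
      pgrad ν (θ ν) xbar + ∑ i, t i • pgrad ν (Sum.elim (g ν) (h ν) i) xbar = 0 ∧
        ∀ i, min (-Sum.elim (g ν) (h ν) i xbar) (t i) = 0 := by
    intro ν
    have hmin_h : ∀ j, Tendsto (fun k => min (-h ν j (x (ψ k + 1))) (mu (ψ k + 1) ν j))
        atTop (𝓝 0) := fun j =>
      squeeze_zero_norm (fun k => (abs_le_sqrt_sum_sq _ j).trans (hA2 (ψ k) ν)) (heps'.comp hψ)
    have hdich := tendsto_zero_or_tendsto_atTop_of_penalty_update
      (R := fun k => √(∑ i, min (-g ν i (x k)) (lam k ν i) ^ 2)) (ρ := fun k => rho k ν)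
      (hτ ν).2 (hγ ν) (fun k => Real.sqrt_nonneg _) (hrho0 ν) (hrho · ν)
    refine exists_kkt_of_tendsto_of_cpld (t := fun k => Sum.elim (lam (ψ k + 1) ν) (mu (ψ k + 1) ν))
      (hθ ν) (Sum.rec (hg ν) (hh ν)) (Sum.rec (hfeasg ν) (hfeash ν)) (hCPLD ν) hxψ ?_ ?_ ?_
    · refine squeeze_zero_norm (fun k => ?_) (heps.comp hψ)
      simpa only [Fintype.sum_sum_type, Sum.elim_inl, Sum.elim_inr, ← hlam, add_assoc, comp_apply]
        using hA1 (ψ k) ν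
    · rintro (i | j)
      · simp [hlam]
      · exact squeeze_zero_norm (fun k => abs_min_zero_le_abs_min (-h ν j (x (ψ k + 1))) _)
          ((tendsto_zero_iff_abs_tendsto_zero _).1 (hmin_h j))
    · rintro (i | j) hi
      · exact tendsto_multiplier_zero_of_inactive (G := fun k => g ν i (x k)) (hlam · ν i)
          (hu_le · ν i) (fun k => abs_le_sqrt_sum_sq (fun i => min (-g ν i (x k)) (lam k ν i)) i)
          hdich hψ (((hg ν i).continuous.tendsto xbar).comp hxψ) hi
      · exact tendsto_zero_of_tendsto_min (((hh ν j).continuous.tendsto xbar).comp hxψ).neg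
          (neg_pos.2 hi) (hmin_h j)
  choose t ht using hplayer
  refine ⟨fun ν i => t ν (.inl i), fun ν j => t ν (.inr j),
    fun ν => ⟨?_, fun i => (ht ν).2 (.inl i), fun j => (ht ν).2 (.inr j)⟩⟩
  simpa [Fintype.sum_sum_type, add_assoc] using (ht ν).1

/-- **Theorem 4.6 (a).** A feasible limit point of the augmented Lagrangian
iterates at which GNEP-CPLD holds for the combined constraints is a KKT point of the GNEP. -/
theorem stmt14 {N : ℕ} {n m p : Fin N → ℕ}
    (θ : Fin N → Strat n → ℝ)
    (g : (ν : Fin N) → Fin (m ν) → Strat n → ℝ)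
    (h : (ν : Fin N) → Fin (p ν) → Strat n → ℝ)
    (hθ : ∀ ν, ContDiff ℝ 1 (θ ν))
    (hg : ∀ ν i, ContDiff ℝ 1 (g ν i))
    (hh : ∀ ν j, ContDiff ℝ 1 (h ν j))
    (x : ℕ → Strat n)
    (lam : (k : ℕ) → (ν : Fin N) → Fin (m ν) → ℝ)
    (mu : (k : ℕ) → (ν : Fin N) → Fin (p ν) → ℝ)
    (u : (k : ℕ) → (ν : Fin N) → Fin (m ν) → ℝ)
    (rho : ℕ → Fin N → ℝ)
    (umax : ℝ) (τ γ : Fin N → ℝ)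
    (humax : 0 ≤ umax)
    (hτ : ∀ ν, τ ν ∈ Set.Ioo (0:ℝ) 1)
    (hγ : ∀ ν, 1 < γ ν)
    (hrho0 : ∀ ν, 0 < rho 0 ν)
    (hu0 : ∀ ν i, u 0 ν i ∈ Set.Icc 0 umax)
    (hlam : ∀ k ν i, lam (k+1) ν i = max (u k ν i + rho k ν * g ν i (x (k+1))) 0)
    (hu : ∀ k ν i, u (k+1) ν i = min (lam (k+1) ν i) umax)
    (hrho : ∀ k ν,
      (Real.sqrt (∑ i, (min (-(g ν i (x (k+1)))) (lam (k+1) ν i)) ^ 2) ≤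
          τ ν * Real.sqrt (∑ i, (min (-(g ν i (x k))) (lam k ν i)) ^ 2) →
        rho (k+1) ν = rho k ν) ∧
      (¬ (Real.sqrt (∑ i, (min (-(g ν i (x (k+1)))) (lam (k+1) ν i)) ^ 2) ≤
          τ ν * Real.sqrt (∑ i, (min (-(g ν i (x k))) (lam k ν i)) ^ 2)) →
        rho (k+1) ν = γ ν * rho k ν))
    (eps eps' : ℕ → ℝ)
    (heps0 : ∀ k, 0 ≤ eps k)
    (heps'0 : ∀ k, 0 ≤ eps' k)
    (heps' : Tendsto eps' atTop (𝓝 0))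
    (hA1 : ∀ k ν, ‖pgrad ν (θ ν) (x (k+1))
        + ∑ i, max (u k ν i + rho k ν * g ν i (x (k+1))) 0 • pgrad ν (g ν i) (x (k+1))
        + ∑ j, mu (k+1) ν j • pgrad ν (h ν j) (x (k+1))‖ ≤ eps k)
    (hA2 : ∀ k ν, Real.sqrt (∑ j, (min (-(h ν j (x (k+1)))) (mu (k+1) ν j)) ^ 2) ≤ eps' k)
    (heps : Tendsto eps atTop (𝓝 0))
    (xbar : Strat n)
    (hclus : MapClusterPt xbar atTop x)
    (hfeasg : ∀ ν i, g ν i xbar ≤ 0)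
    (hfeash : ∀ ν j, h ν j xbar ≤ 0)
    (hCPLD : ∀ ν, CPLDnu ν (Sum.elim (g ν) (h ν)) xbar) :
    ∃ (lambar : (ν : Fin N) → Fin (m ν) → ℝ) (mubar : (ν : Fin N) → Fin (p ν) → ℝ),
      ∀ ν, (pgrad ν (θ ν) xbar + ∑ i, lambar ν i • pgrad ν (g ν i) xbar
          + ∑ j, mubar ν j • pgrad ν (h ν j) xbar = 0) ∧
        (∀ i, min (-(g ν i xbar)) (lambar ν i) = 0) ∧
        (∀ j, min (-(h ν j xbar)) (mubar ν j) = 0) :=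
  stmt14_general θ g h hθ hg hh x lam mu u rho umax τ γ hτ hγ hrho0 hu0 hlam hu hrho eps eps' heps'
    hA1 hA2 heps xbar hclus hfeasg hfeash hCPLD
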